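/- Soundness of CPRHL: if there is a CPRHL proof of the partial reverse Hoare triple [P] C [Q], then [P] C [Q] is valid. -/

import Mathlib

namespace RevHoare

/-! ### States -/

abbrev Var := ℕ
abbrev State := Var → ℕ

/-- state update `σ[x ↦ c]`. -/
def upd (σ : State) (x : Var) (c : ℕ) : State := fun y => if y = x then c else σ y

/-! ### Expressions -/

inductive Expr : Type where
  | var : Var → Expr
  | const : ℕ → Expr
  | app : {k : ℕ} → ((Fin k → ℕ) → ℕ) → (Fin k → Expr) → Expr

namespace Expr

/-- `⟦E⟧σ`. -/
def eval : Expr → State → ℕ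
  | var x, σ => σ x
  | const n, _ => n
  | app f es, σ => f fun i => (es i).eval σ

/-- `E[x := E']` (substitution of `E'` for `x` in the last argument). -/
def subst (x : Var) (E' : Expr) : Expr → Expr
  | var y => if y = x then E' else var y
  | const n => const n
  | app f es => app f fun i => subst x E' (es i)

/-- variables occurring in an expression. -/
def fv : Expr → Finset Var
  | var y => {y}
  | const _ => ∅
  | app _ es => Finset.univ.biUnion fun i => (es i).fv

end Expr

/-! ### Boolean conditions -/

inductive BExpr : Type where
  | rel : {k : ℕ} → ((Fin k → ℕ) → Prop) → (Fin k → Expr) → BExpr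
  | eq : Expr → Expr → BExpr
  | le : Expr → Expr → BExpr
  | not : BExpr → BExpr
  | and : BExpr → BExpr → BExpr
  | or : BExpr → BExpr → BExpr

namespace BExpr

/-- `B.holds σ` means `⟦B⟧σ = ⊤`; `¬ B.holds σ` means `⟦B⟧σ = ⊥`. -/
def holds : BExpr → State → Prop
  | rel R es, σ => R fun i => (es i).eval σ
  | eq E₁ E₂, σ => E₁.eval σ = E₂.eval σ
  | le E₁ E₂, σ => E₁.eval σ ≤ E₂.eval σ
  | not B, σ => ¬ holds B σ
  | and B₁ B₂, σ => holds B₁ σ ∧ holds B₂ σ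
  | or B₁ B₂, σ => holds B₁ σ ∨ holds B₂ σ

/-- `B[x := E]`. -/
def subst (x : Var) (E : Expr) : BExpr → BExpr
  | rel R es => rel R fun i => Expr.subst x E (es i)
  | eq E₁ E₂ => eq (Expr.subst x E E₁) (Expr.subst x E E₂)
  | le E₁ E₂ => le (Expr.subst x E E₁) (Expr.subst x E E₂)
  | not B => not (subst x E B)
  | and B₁ B₂ => and (subst x E B₁) (subst x E B₂)
  | or B₁ B₂ => or (subst x E B₁) (subst x E B₂)

/-- variables occurring in a Boolean condition. -/
def vars : BExpr → Finset Var
  | rel _ es => Finset.univ.biUnion fun i => (es i).fv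
  | eq E₁ E₂ => E₁.fv ∪ E₂.fv
  | le E₁ E₂ => E₁.fv ∪ E₂.fv
  | not B => vars B
  | and B₁ B₂ => vars B₁ ∪ vars B₂
  | or B₁ B₂ => vars B₁ ∪ vars B₂

end BExpr

/-! ### Assertions -/

inductive Assertion : Type where
  | base : BExpr → Assertion
  | not : Assertion → Assertion
  | or : Assertion → Assertion → Assertion
  | and : Assertion → Assertion → Assertion
  | imp : Assertion → Assertion → Assertion
  | ex : Var → Assertion → Assertion
  | all : Var → Assertion → Assertion

namespace Assertion

/-- `P.sat σ` means `σ ⊨ P`. -/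
def sat : Assertion → State → Prop
  | base B, σ => B.holds σ
  | not P, σ => ¬ sat P σ
  | or P Q, σ => sat P σ ∨ sat Q σ
  | and P Q, σ => sat P σ ∧ sat Q σ
  | imp P Q, σ => sat P σ → sat Q σ
  | ex x P, σ => ∃ c : ℕ, sat P (upd σ x c)
  | all x P, σ => ∀ c : ℕ, sat P (upd σ x c)

/-- all variables occurring in `P` (free or bound, including binders). -/
def allVars : Assertion → Finset Var
  | base B => B.vars
  | not P => allVars P
  | or P Q => allVars P ∪ allVars Q
  | and P Q => allVars P ∪ allVars Q
  | imp P Q => allVars P ∪ allVars Q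
  | ex y P => insert y (allVars P)
  | all y P => insert y (allVars P)

/-- naive renaming of the free occurrences of the variable `x` to the variable `z`. -/
def rename (x z : Var) : Assertion → Assertion
  | base B => base (B.subst x (Expr.var z))
  | not P => not (rename x z P)
  | or P Q => or (rename x z P) (rename x z Q)
  | and P Q => and (rename x z P) (rename x z Q)
  | imp P Q => imp (rename x z P) (rename x z Q)
  | ex y P => if y = x then ex y P else ex y (rename x z P)
  | all y P => if y = x then all y P else all y (rename x z P)

/-- size (number of assertion constructors). -/
def asize : Assertion → ℕ
  | base _ => 1
  | not P => asize P + 1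
  | or P Q => asize P + asize Q + 1
  | and P Q => asize P + asize Q + 1
  | imp P Q => asize P + asize Q + 1
  | ex _ P => asize P + 1
  | all _ P => asize P + 1

theorem asize_rename (x z : Var) : ∀ P : Assertion, (rename x z P).asize = P.asize := by
  intro P
  induction P with
  | base B => rfl
  | not P ih => simp [rename, asize, ih]
  | or P Q ih1 ih2 => simp [rename, asize, ih1, ih2]
  | and P Q ih1 ih2 => simp [rename, asize, ih1, ih2]
  | imp P Q ih1 ih2 => simp [rename, asize, ih1, ih2]
  | ex y P ih => by_cases h : y = x <;> simp [rename, asize, h, ih]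
  | all y P ih => by_cases h : y = x <;> simp [rename, asize, h, ih]

/-- a variable not belonging to the finite set `s`. -/
def fresh (s : Finset Var) : Var := s.sup id + 1

/-- capture-avoiding substitution `P[x := E]` (bound variables are renamed afresh). -/
def subst (x : Var) (E : Expr) : Assertion → Assertion
  | base B => base (B.subst x E)
  | not P => not (subst x E P)
  | or P Q => or (subst x E P) (subst x E Q)
  | and P Q => and (subst x E P) (subst x E Q)
  | imp P Q => imp (subst x E P) (subst x E Q)
  | ex y P =>
      let z := fresh (E.fv ∪ insert x (allVars P))
      ex z (subst x E (rename y z P))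
  | all y P =>
      let z := fresh (E.fv ∪ insert x (allVars P))
      all z (subst x E (rename y z P))
termination_by P => P.asize
decreasing_by all_goals simp [asize, asize_rename] <;> omega

end Assertion

/-- semantic entailment `P ⊨ Q` between assertions. -/
def entails (P Q : Assertion) : Prop := ∀ σ : State, P.sat σ → Q.sat σ

/-! ### Programs and small-step semantics -/

/-- non-empty commands `C'` of the grammar. -/
inductive Cmd : Type where
  | assign : Var → Expr → Cmd
  | seq : Cmd → Cmd → Cmd
  | while : BExpr → Option Cmd → Cmd
  | choice : Option Cmd → Option Cmd → Cmd

/-- programs: `none` is the empty program ε, giving the grammar `C ::= ε | C'`. -/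
abbrev Prog := Option Cmd

/-- sequential composition `C₀;C₁` of programs, identifying `ε;C` and `C;ε` with `C`. -/
def Prog.comp : Prog → Prog → Prog
  | none, C => C
  | some c, none => some c
  | some c₀, some c₁ => some (Cmd.seq c₀ c₁)

mutual
/-- variables occurring in a (non-empty) command. -/
def Cmd.vars : Cmd → Finset Var
  | .assign x E => insert x E.fv
  | .seq c₀ c₁ => c₀.vars ∪ c₁.vars
  | .while B C => B.vars ∪ progVars C
  | .choice C₀ C₁ => progVars C₀ ∪ progVars C₁
/-- variables occurring in a program. -/
def progVars : Prog → Finset Var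
  | none => ∅
  | some c => c.vars
end

/-- the small-step relation `⟨C,σ⟩ → ⟨C',σ'⟩` on configurations. -/
inductive Step : Prog × State → Prog × State → Prop where
  | assign {x E σ} : Step (some (.assign x E), σ) (none, upd σ x (E.eval σ))
  | whileTrue {B C σ} : B.holds σ →
      Step (some (.while B C), σ) (Prog.comp C (some (.while B C)), σ)
  | whileFalse {B C σ} : ¬ B.holds σ → Step (some (.while B C), σ) (none, σ)
  | seq {c₀ c₁ σ C₀' σ'} : Step (some c₀, σ) (C₀', σ') →
      Step (some (.seq c₀ c₁), σ) (Prog.comp C₀' (some c₁), σ')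
  | choiceL {C₀ C₁ σ} : Step (some (.choice C₀ C₁), σ) (C₀, σ)
  | choiceR {C₀ C₁ σ} : Step (some (.choice C₀ C₁), σ) (C₁, σ)

/-- `→*`, the reflexive-transitive closure of `→`. -/
def Steps : Prog × State → Prog × State → Prop := Relation.ReflTransGen Step

/-- `→ⁿ`, an `n`-step execution. -/
inductive StepN : ℕ → Prog × State → Prog × State → Prop where
  | refl (c) : StepN 0 c c
  | step {c c' c'' n} : Step c c' → StepN n c' c'' → StepN (n + 1) c c''

/-! ### Partial reverse Hoare triples -/

/-- validity of the partial reverse Hoare triple `[P] C [Q]`. -/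
def Valid (P : Assertion) (C : Prog) (Q : Assertion) : Prop :=
  ∀ σ σ' : State, Q.sat σ' → Steps (C, σ) (none, σ') → P.sat σ

/-- the weakest pre-condition set `WPR(C,Q)`. -/
def WPR (C : Prog) (Q : Assertion) : Set State :=
  {σ | ∃ σ', Steps (C, σ) (none, σ') ∧ Q.sat σ'}

/-! ### The ordinary proof system PRHL -/

/-- provability in the ordinary proof system `PRHL`. -/
inductive PRHL : Assertion → Prog → Assertion → Prop where
  | ax (Q) : PRHL Q none Q
  | assign (Q x E) : PRHL (Q.subst x E) (some (.assign x E)) Q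
  | seq {P R Q C₀ C₁} : PRHL P C₀ R → PRHL R C₁ Q → PRHL P (Prog.comp C₀ C₁) Q
  | cons {P P' Q Q' C} : PRHL P C Q → entails P P' → entails Q' Q → PRHL P' C Q'
  | or {P Q C₀ C₁} : PRHL P C₀ Q → PRHL P C₁ Q → PRHL P (some (.choice C₀ C₁)) Q
  | whileR {P B C} : PRHL ((Assertion.base B).imp P) C P →
      PRHL P (some (.while B C)) ((Assertion.not (.base B)).imp P)

/-! ### The cyclic proof system CPRHL -/

/-- a partial reverse Hoare triple `[pre] prog [post]`. -/
structure Triple : Type where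
  pre : Assertion
  prog : Prog
  post : Assertion

/-- one application of a CPRHL rule other than (Cons): conclusion and its list of premises. -/
inductive CRule : Triple → List Triple → Prop where
  | ax (Q) : CRule ⟨Q, none, Q⟩ []
  | assign (P Q x E C) :
      CRule ⟨P.subst x E, Prog.comp (some (.assign x E)) C, Q⟩ [⟨P, C, Q⟩]
  | or (P Q C₀ C₁ C) :
      CRule ⟨P, Prog.comp (some (.choice C₀ C₁)) C, Q⟩
        [⟨P, Prog.comp C₀ C, Q⟩, ⟨P, Prog.comp C₁ C, Q⟩]
  | whileR (P Q B C C') :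
      CRule ⟨P, Prog.comp (some (.while B C)) C', Q⟩
        [⟨(Assertion.not (.base B)).imp P, C', Q⟩,
         ⟨(Assertion.base B).imp P, Prog.comp C (Prog.comp (some (.while B C)) C'), Q⟩]

/-- one application of the CPRHL rule (Cons): conclusion `t` from premise `t'`. -/
def ConsRule (t t' : Triple) : Prop :=
  t.prog = t'.prog ∧ entails t'.pre t.pre ∧ entails t.post t'.post

/-- A `CPRHL` pre-proof (with open leaves), presented as a finite proof graph:
back-link leaves are identified with their companions, which carry the same label.
`isOpen v = true` marks the proper open leaves, which carry no rule.
At every other node either the rule (Cons) (when `isCons v = true`) or one of the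
remaining rules is applied, whose premises are the labels of the children. -/
structure CPreProof : Type where
  size : ℕ
  root : Fin size
  label : Fin size → Triple
  isOpen : Fin size → Bool
  isCons : Fin size → Bool
  children : Fin size → List (Fin size)
  open_ok : ∀ v, isOpen v = true → children v = []
  cons_ok : ∀ v, isOpen v = false → isCons v = true →
      ∃ w, children v = [w] ∧ ConsRule (label v) (label w)
  rule_ok : ∀ v, isOpen v = false → isCons v = false →
      CRule (label v) ((children v).map label)

/-- the global soundness condition: along every infinite path (in the tree unfolding
induced by the back-links), rules other than (Cons) are applied infinitely often. -/
def CPreProof.GlobalSound (D : CPreProof) : Prop :=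
  ∀ f : ℕ → Fin D.size, (∀ i, f (i + 1) ∈ D.children (f i)) →
    ∀ N, ∃ i, N ≤ i ∧ D.isCons (f i) = false

/-- provability in the cyclic proof system `CPRHL`: there is a CPRHL proof
(a globally sound pre-proof without proper open leaves) of the given triple. -/
def CProvable (t : Triple) : Prop :=
  ∃ D : CPreProof, D.GlobalSound ∧ D.label D.root = t ∧ ∀ v, D.isOpen v = false


/-! A counterexample of length `n` to a triple is an `n`-step terminating execution from a
state violating the precondition to a state satisfying the postcondition. Every rule other
than (Cons) turns a counterexample to its conclusion into a strictly shorter one to one of its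
premises, and (Cons) preserves the length. In a proof without open leaves, a counterexample at
the root therefore yields an infinite path along which the lengths never increase and drop at
every rule other than (Cons); global soundness makes them drop infinitely often, which is
impossible in `ℕ`. -/

theorem upd_eq_update (σ : State) (x : Var) (c : ℕ) : upd σ x c = Function.update σ x c :=
  funext fun y => (Function.update_apply σ x c y).symm

namespace Expr

theorem eval_subst (x : Var) (E' e : Expr) (σ : State) :
    (subst x E' e).eval σ = e.eval (upd σ x (E'.eval σ)) := by
  induction e with
  | var y => by_cases h : y = x <;> simp [subst, eval, upd, h]
  | const n => rfl
  | app f es ih => simp only [subst, eval, ih]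

theorem eval_congr {σ σ' : State} (e : Expr) (h : ∀ v ∈ e.fv, σ v = σ' v) :
    e.eval σ = e.eval σ' := by
  induction e with
  | var y => exact h y (Finset.mem_singleton_self y)
  | const n => rfl
  | app f es ih =>
    simp only [eval]
    congr 1
    funext i
    exact ih i fun v hv => h v (Finset.mem_biUnion.2 ⟨i, Finset.mem_univ _, hv⟩)

end Expr

namespace BExpr

theorem holds_subst (x : Var) (E : Expr) (B : BExpr) (σ : State) :
    (B.subst x E).holds σ ↔ B.holds (upd σ x (E.eval σ)) := by
  induction B with
  | rel R es => simp only [subst, holds, Expr.eval_subst]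
  | eq E₁ E₂ => simp only [subst, holds, Expr.eval_subst]
  | le E₁ E₂ => simp only [subst, holds, Expr.eval_subst]
  | not B ih => simp only [subst, holds, ih]
  | and B₁ B₂ ih₁ ih₂ => simp only [subst, holds, ih₁, ih₂]
  | or B₁ B₂ ih₁ ih₂ => simp only [subst, holds, ih₁, ih₂]

theorem holds_congr {σ σ' : State} (B : BExpr) (h : ∀ v ∈ B.vars, σ v = σ' v) :
    B.holds σ ↔ B.holds σ' := by
  induction B with
  | rel R es =>
    simp only [holds]
    congr! 2 with i
    exact Expr.eval_congr _ fun v hv => h v (Finset.mem_biUnion.2 ⟨i, Finset.mem_univ _, hv⟩)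
  | eq E₁ E₂ | le E₁ E₂ =>
    simp only [vars, Finset.mem_union] at h
    simp only [holds, Expr.eval_congr E₁ fun v hv => h v (.inl hv),
      Expr.eval_congr E₂ fun v hv => h v (.inr hv)]
  | not B ih => simp only [holds, ih h]
  | and B₁ B₂ ih₁ ih₂ | or B₁ B₂ ih₁ ih₂ =>
    simp only [vars, Finset.mem_union] at h
    simp only [holds, ih₁ fun v hv => h v (.inl hv), ih₂ fun v hv => h v (.inr hv)]

end BExpr

namespace Assertion

theorem sat_congr {σ σ' : State} (P : Assertion) (h : ∀ v ∈ P.allVars, σ v = σ' v) :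
    P.sat σ ↔ P.sat σ' := by
  induction P generalizing σ σ' with
  | base B => exact B.holds_congr h
  | not P ih => simp only [sat, ih h]
  | or P Q ih₁ ih₂ | and P Q ih₁ ih₂ | imp P Q ih₁ ih₂ =>
    simp only [allVars, Finset.mem_union] at h
    simp only [sat, ih₁ fun v hv => h v (.inl hv), ih₂ fun v hv => h v (.inr hv)]
  | ex y P ih | all y P ih =>
    simp only [allVars, Finset.mem_insert] at h
    have hupd (c : ℕ) : P.sat (upd σ y c) ↔ P.sat (upd σ' y c) :=
      ih fun v hv => by by_cases hvy : v = y <;> simp [upd, hvy, h v (.inr hv)]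
    simp only [sat, hupd]

theorem sat_rename {x z : Var} {P : Assertion} (hz : z ∉ P.allVars) (σ : State) :
    (P.rename x z).sat σ ↔ P.sat (upd σ x (σ z)) := by
  induction P generalizing σ with
  | base B => exact B.holds_subst x (.var z) σ
  | not P ih => simp only [rename, sat, ih hz]
  | or P Q ih₁ ih₂ | and P Q ih₁ ih₂ | imp P Q ih₁ ih₂ =>
    simp only [allVars, Finset.mem_union, not_or] at hz
    simp only [rename, sat, ih₁ hz.1, ih₂ hz.2]
  | ex y P ih | all y P ih =>
    simp only [allVars, Finset.mem_insert, not_or] at hz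
    by_cases hyx : y = x
    · subst hyx
      simp only [rename, if_pos, sat, upd_eq_update, Function.update_idem]
    · simp only [rename, if_neg hyx, sat, ih hz.2, upd_eq_update,
        Function.update_of_ne hz.1, Function.update_comm hyx]

theorem fresh_notMem (s : Finset Var) : fresh s ∉ s := fun h =>
  Nat.not_succ_le_self _ (Finset.le_sup (f := id) h)

theorem sat_rename_of_fresh {x y z : Var} {E : Expr} {P : Assertion}
    (hz : z ∉ E.fv ∪ insert x P.allVars) (σ : State) (c : ℕ) :
    (P.rename y z).sat (upd (upd σ z c) x (E.eval (upd σ z c))) ↔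
      P.sat (upd (upd σ x (E.eval σ)) y c) := by
  simp only [Finset.mem_union, Finset.mem_insert, not_or] at hz
  obtain ⟨hzE, hzx, hzP⟩ := hz
  have hE : E.eval (upd σ z c) = E.eval σ :=
    E.eval_congr fun v hv => by simp [upd, ne_of_mem_of_not_mem hv hzE]
  rw [hE, sat_rename hzP]
  refine sat_congr P fun v hv => ?_
  have hvz : v ≠ z := ne_of_mem_of_not_mem hv hzP
  simp only [upd]
  split_ifs <;> simp_all

theorem sat_subst (x : Var) (E : Expr) (P : Assertion) (σ : State) :
    (P.subst x E).sat σ ↔ P.sat (upd σ x (E.eval σ)) := by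
  fun_induction subst x E P generalizing σ with
  | case1 B => exact B.holds_subst x E σ
  | case2 P ih => simp only [sat, ih]
  | case3 P Q ihP ihQ | case4 P Q ihP ihQ | case5 P Q ihP ihQ => simp only [sat, ihP, ihQ]
  | case6 y P z ih | case7 y P z ih =>
    have hz : z ∉ E.fv ∪ insert x P.allVars := fresh_notMem _
    simp only [sat, ih, sat_rename_of_fresh hz]

end Assertion

theorem Prog.comp_eq_none {a b : Prog} (h : Prog.comp a b = none) : a = none ∧ b = none := by
  cases a <;> cases b <;> simp_all [Prog.comp]

theorem step_comp_some_iff {c : Cmd} {C : Prog} {σ : State} {q : Prog × State} :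
    Step (Prog.comp (some c) C, σ) q ↔
      ∃ C' σ', Step (some c, σ) (C', σ') ∧ q = (Prog.comp C' C, σ') := by
  cases C with
  | none =>
    have hcomp (C' : Prog) : Prog.comp C' none = C' := by cases C' <;> rfl
    simp only [hcomp]
    exact ⟨fun h => ⟨_, _, h, rfl⟩, by rintro ⟨_, _, h, rfl⟩; exact h⟩
  | some c₁ =>
    refine ⟨fun h => ?_, by rintro ⟨_, _, h, rfl⟩; exact .seq h⟩
    cases h with
    | seq h => exact ⟨_, _, h, rfl⟩

theorem exists_stepN_of_steps {p q : Prog × State} (h : Steps p q) : ∃ n, StepN n p q := by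
  induction h using Relation.ReflTransGen.head_induction_on with
  | refl => exact ⟨0, .refl _⟩
  | head hs _ ih =>
    obtain ⟨n, hn⟩ := ih
    exact ⟨n + 1, .step hs hn⟩

namespace StepN

variable {n k m : ℕ} {a b c : Prog} {σ τ σ' : State}

theorem eq_of_zero {p q : Prog × State} (h : StepN 0 p q) : p = q := by
  cases h
  rfl

theorem exists_of_succ {p q : Prog × State} (h : StepN (n + 1) p q) :
    ∃ r, Step p r ∧ StepN n r q := by
  cases h with
  | step hs hn => exact ⟨_, hs, hn⟩

theorem comp_split (h : StepN n (Prog.comp a b, σ) (none, σ')) :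
    ∃ k m τ, k + m = n ∧ StepN k (a, σ) (none, τ) ∧ StepN m (b, τ) (none, σ') := by
  induction n generalizing a σ with
  | zero =>
    obtain ⟨hab, rfl⟩ := Prod.mk.inj h.eq_of_zero
    obtain ⟨rfl, rfl⟩ := Prog.comp_eq_none hab
    exact ⟨0, 0, σ, rfl, .refl _, .refl _⟩
  | succ n ih =>
    cases a with
    | none => exact ⟨0, n + 1, σ, by omega, .refl _, h⟩
    | some c =>
      obtain ⟨_, hs, hrest⟩ := h.exists_of_succ
      obtain ⟨C', σ₁, hstep, rfl⟩ := step_comp_some_iff.1 hs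
      obtain ⟨k, m, τ, rfl, hk, hm⟩ := ih hrest
      exact ⟨k + 1, m, τ, by omega, .step hstep hk, hm⟩

theorem comp_join (ha : StepN k (a, σ) (none, τ)) (hb : StepN m (b, τ) (none, σ')) :
    StepN (k + m) (Prog.comp a b, σ) (none, σ') := by
  induction k generalizing a σ with
  | zero =>
    obtain ⟨rfl, rfl⟩ := Prod.mk.inj ha.eq_of_zero
    simpa [Prog.comp] using hb
  | succ k ih =>
    obtain ⟨⟨C', σ₁⟩, hs, hrest⟩ := ha.exists_of_succ
    cases a with
    | none => cases hs
    | some c =>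
      rw [Nat.add_right_comm]
      exact .step (step_comp_some_iff.2 ⟨_, _, hs, rfl⟩) (ih hrest)

-- `Prog.comp` is not syntactically associative, yet unfolding a loop inside `_;C'` yields
-- `(C;while B do C);C'` where the (While) premise has `C;(while B do C;C')`.
theorem comp_assoc (h : StepN n (Prog.comp (Prog.comp a b) c, σ) (none, σ')) :
    StepN n (Prog.comp a (Prog.comp b c), σ) (none, σ') := by
  obtain ⟨_, m, τ, rfl, hab, hc⟩ := h.comp_split
  obtain ⟨k, l, ρ, rfl, ha, hb⟩ := hab.comp_split
  rw [Nat.add_assoc]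
  exact ha.comp_join (hb.comp_join hc)

theorem exists_of_comp_some {c₀ : Cmd} (h : StepN n (Prog.comp (some c₀) b, σ) (none, σ')) :
    ∃ m C' τ, m < n ∧ Step (some c₀, σ) (C', τ) ∧
      StepN m (Prog.comp C' b, τ) (none, σ') := by
  obtain ⟨_ | k, m, ρ, rfl, hc, hb⟩ := h.comp_split
  · cases hc
  · obtain ⟨⟨C', τ⟩, hs, hk⟩ := hc.exists_of_succ
    exact ⟨k + m, C', τ, by omega, hs, hk.comp_join hb⟩

end StepN

def Triple.Counterexample (t : Triple) (n : ℕ) : Prop :=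
  ∃ σ σ', t.post.sat σ' ∧ StepN n (t.prog, σ) (none, σ') ∧ ¬ t.pre.sat σ

theorem valid_of_forall_not_counterexample {P Q : Assertion} {C : Prog}
    (h : ∀ n, ¬ Triple.Counterexample ⟨P, C, Q⟩ n) : Valid P C Q := by
  intro σ σ' hQ hsteps
  by_contra hP
  obtain ⟨n, hn⟩ := exists_stepN_of_steps hsteps
  exact h n ⟨σ, σ', hQ, hn, hP⟩

theorem ConsRule.counterexample {t t' : Triple} (hr : ConsRule t t') {n : ℕ}
    (hc : t.Counterexample n) : t'.Counterexample n := by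
  obtain ⟨hprog, hpre, hpost⟩ := hr
  obtain ⟨σ, σ', hQ, hn, hP⟩ := hc
  exact ⟨σ, σ', hpost σ' hQ, hprog ▸ hn, fun h => hP (hpre σ h)⟩

theorem CRule.exists_shorter_counterexample {t : Triple} {ts : List Triple} (hr : CRule t ts)
    {n : ℕ} (hc : t.Counterexample n) : ∃ t' ∈ ts, ∃ m < n, t'.Counterexample m := by
  obtain ⟨σ, σ', hQ, hn, hP⟩ := hc
  cases hr with
  | ax Q =>
    cases hn with
    | refl => exact absurd hQ hP
    | step hs => cases hs
  | assign P Q x E C =>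
    obtain ⟨m, _, _, hm, hs, hrest⟩ := hn.exists_of_comp_some
    cases hs
    exact ⟨_, List.mem_singleton_self _, m, hm, _, σ', hQ, hrest,
      fun h => hP ((Assertion.sat_subst x E P σ).2 h)⟩
  | or P Q C₀ C₁ C =>
    obtain ⟨m, _, _, hm, hs, hrest⟩ := hn.exists_of_comp_some
    cases hs with
    | choiceL => exact ⟨⟨P, Prog.comp C₀ C, Q⟩, by simp, m, hm, σ, σ', hQ, hrest, hP⟩
    | choiceR => exact ⟨⟨P, Prog.comp C₁ C, Q⟩, by simp, m, hm, σ, σ', hQ, hrest, hP⟩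
  | whileR P Q B C C' =>
    obtain ⟨m, _, _, hm, hs, hrest⟩ := hn.exists_of_comp_some
    cases hs with
    | whileTrue hB =>
      exact ⟨⟨(Assertion.base B).imp P, Prog.comp C (Prog.comp (some (.while B C)) C'), Q⟩,
        by simp, m, hm, σ, σ', hQ, hrest.comp_assoc, fun h => hP (h hB)⟩
    | whileFalse hB =>
      exact ⟨⟨(Assertion.not (.base B)).imp P, C', Q⟩, by simp, m, hm, σ, σ', hQ, hrest,
        fun h => hP (h hB)⟩

theorem Antitone.exists_forall_ge_apply_succ_eq {g : ℕ → ℕ} (hg : Antitone g) :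
    ∃ N, ∀ i ≥ N, g (i + 1) = g i :=
  ⟨Function.argmin g, fun i hi =>
    le_antisymm (hg i.le_succ) ((hg hi).trans (Function.argmin_le g _))⟩

namespace CPreProof

variable {D : CPreProof}

theorem exists_child_counterexample (hclosed : ∀ v, D.isOpen v = false) {v : Fin D.size} {n : ℕ}
    (hc : (D.label v).Counterexample n) :
    ∃ w ∈ D.children v, ∃ m ≤ n, (D.isCons v = false → m < n) ∧
      (D.label w).Counterexample m := by
  cases hcons : D.isCons v with
  | true =>
    obtain ⟨w, hw, hr⟩ := D.cons_ok v (hclosed v) hcons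
    exact ⟨w, by simp [hw], n, le_rfl, nofun, hr.counterexample hc⟩
  | false =>
    obtain ⟨t', ht', m, hm, hc'⟩ :=
      (D.rule_ok v (hclosed v) hcons).exists_shorter_counterexample hc
    obtain ⟨w, hw, rfl⟩ := List.mem_map.1 ht'
    exact ⟨w, hw, m, hm.le, fun _ => hm, hc'⟩

theorem GlobalSound.not_counterexample (hGS : D.GlobalSound) (hclosed : ∀ v, D.isOpen v = false)
    (v : Fin D.size) (n : ℕ) :
    ¬ (D.label v).Counterexample n := by
  intro hc
  let Node := {p : Fin D.size × ℕ // (D.label p.1).Counterexample p.2}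
  have hnext (p : Node) : ∃ q : Node, q.1.1 ∈ D.children p.1.1 ∧ q.1.2 ≤ p.1.2 ∧
      (D.isCons p.1.1 = false → q.1.2 < p.1.2) := by
    obtain ⟨w, hw, m, hm, hlt, hc⟩ := exists_child_counterexample hclosed p.2
    exact ⟨⟨(w, m), hc⟩, hw, hm, hlt⟩
  choose next hchild hle hlt using hnext
  let path (i : ℕ) : Node := next^[i] ⟨(v, n), hc⟩
  have hpath (i : ℕ) : path (i + 1) = next (path i) := Function.iterate_succ_apply' ..
  obtain ⟨N, hN⟩ := Antitone.exists_forall_ge_apply_succ_eq (g := fun i => (path i).1.2)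
    (antitone_nat_of_succ_le fun i => hpath i ▸ hle (path i))
  obtain ⟨i, hi, hcons⟩ :=
    hGS (fun i => (path i).1.1) (fun i => hpath i ▸ hchild (path i)) N
  exact (hlt (path i) hcons).ne (hpath i ▸ hN i hi)

end CPreProof

/-- Soundness of CPRHL: if there is a CPRHL proof of the partial
reverse Hoare triple `[P] C [Q]`, then `[P] C [Q]` is valid. -/
theorem cprhl_sound (P Q : Assertion) (C : Prog) (h : CProvable ⟨P, C, Q⟩) :
    Valid P C Q := by
  obtain ⟨D, hGS, hroot, hclosed⟩ := h
  refine valid_of_forall_not_counterexample fun n => ?_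
  rw [← hroot]
  exact hGS.not_counterexample hclosed D.root n

end RevHoare
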